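/- Let G be a connected weighted graph on n ≥ 2 vertices with Laplacian L_G, and let H be a weighted graph on the same vertices whose Laplacian L_H makes it a (1±ε)-spectral sparsifier of G with 0 ≤ ε < 1. Let γ > 0, 1 ≤ l ≤ n−1, let y ∈ ℝⁿ satisfy |y_i| ≤ k for all i, assume lγ(1−ε)λ₁ > 1, and let S, S' be two size-l subsets of {1,…,n} differing in exactly one element. Let g ∈ F be the unique solution of P_F((lγ·L_H + I_S)·g) = P_F(y_{S'}) and g' ∈ F the unique solution of P_F((lγ·L_H + I_{S'})·g') = P_F(y_{S'}). Then ‖g − g'‖₂ ≤ 1.5·k·√l/(lγ(1−ε)λ₁ − 1)². -/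

import Mathlib

/-!
Both `g'` and `g - g'` solve a projected system whose matrix `lγ·L_H + I_T` is coercive on `F`
with constant `c = lγ(1-ε)λ₁`: the sparsifier bound transfers the Rayleigh bound `λ₁` from `L_G`
to `L_H`, and `I_T` is positive semidefinite. Testing such a system against its own solution
`x ∈ F` removes the projection and gives `c‖x‖² ≤ ⟨x, b⟩ ≤ ‖x‖‖b‖`. For `g'` the right-hand side
is `y_{S'}`, of norm at most `k√l`; for `g - g'` it is `(I_{S'} - I_S) g'`, of norm at most `‖g'‖`.
Hence `‖g - g'‖ ≤ k√l/c² ≤ 1.5·k√l/(c-1)²`.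
-/

open Matrix BigOperators Finset
open scoped Classical

noncomputable section

/-- The Laplacian of a weighted graph given by its adjacency matrix. -/
def Lap {n : ℕ} (A : Matrix (Fin n) (Fin n) ℝ) : Matrix (Fin n) (Fin n) ℝ :=
  Matrix.diagonal (fun i => ∑ j, A i j) - A

/-- `A` is a weighted graph adjacency matrix: symmetric, nonnegative, zero diagonal. -/
def IsWeightedGraph {n : ℕ} (A : Matrix (Fin n) (Fin n) ℝ) : Prop :=
  A.IsSymm ∧ (∀ i j, 0 ≤ A i j) ∧ (∀ i, A i i = 0)

/-- The graph with edge set `{(i,j) : A i j > 0}` is connected. -/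
def GraphConnected {n : ℕ} (A : Matrix (Fin n) (Fin n) ℝ) : Prop :=
  (SimpleGraph.fromRel (fun i j => 0 < A i j)).Connected

/-- `LH` is the Laplacian of a `(1±ε)`-spectral sparsifier of the graph with Laplacian `LG`. -/
def IsSparsifier {n : ℕ} (LG LH : Matrix (Fin n) (Fin n) ℝ) (ε : ℝ) : Prop :=
  ∀ x : Fin n → ℝ,
    (1 - ε) * (x ⬝ᵥ LG.mulVec x) ≤ x ⬝ᵥ LH.mulVec x ∧
    x ⬝ᵥ LH.mulVec x ≤ (1 + ε) * (x ⬝ᵥ LG.mulVec x)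

/-- Orthogonal projection `I - (1/n)·1·1ᵀ` onto `F = {f : ⟨f,1⟩ = 0}`. -/
def PF (n : ℕ) : Matrix (Fin n) (Fin n) ℝ :=
  1 - (n : ℝ)⁻¹ • Matrix.of (fun _ _ => (1 : ℝ))

/-- Diagonal 0/1 matrix selecting the coordinates in `S`. -/
def IS {n : ℕ} (S : Finset (Fin n)) : Matrix (Fin n) (Fin n) ℝ :=
  Matrix.diagonal (fun i => if i ∈ S then (1 : ℝ) else 0)

/-- Euclidean norm of a vector. -/
def vnorm {n : ℕ} (x : Fin n → ℝ) : ℝ := Real.sqrt (∑ i, (x i) ^ 2)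

/-- `lam` is the smallest eigenvalue of `L` restricted to `F = {x : ⟨x,1⟩ = 0}`, i.e. the
minimum of the Rayleigh quotient over nonzero vectors of `F`. -/
def IsLam1 {n : ℕ} (L : Matrix (Fin n) (Fin n) ℝ) (lam : ℝ) : Prop :=
  IsLeast {r | ∃ x : Fin n → ℝ, x ≠ 0 ∧ (∑ i, x i) = 0 ∧
    r = (x ⬝ᵥ L.mulVec x) / (∑ i, (x i) ^ 2)} lam

/-- `lam` is the largest eigenvalue of `L`: the maximum of the Rayleigh quotient. -/
def IsLamN {n : ℕ} (L : Matrix (Fin n) (Fin n) ℝ) (lam : ℝ) : Prop :=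
  IsGreatest {r | ∃ x : Fin n → ℝ, x ≠ 0 ∧
    r = (x ⬝ᵥ L.mulVec x) / (∑ i, (x i) ^ 2)} lam

/-- `Lp` is the Moore–Penrose pseudoinverse of `L`. -/
def IsMoorePenrose {n : ℕ} (L Lp : Matrix (Fin n) (Fin n) ℝ) : Prop :=
  L * Lp * L = L ∧ Lp * L * Lp = Lp ∧ (L * Lp).IsSymm ∧ (Lp * L).IsSymm

/-- The stability constant `β` of sparse-HFS. -/
def betaHFS (l : ℕ) (γ ε lam1 k : ℝ) : ℝ :=
  1.5 * k * Real.sqrt l / ((l : ℝ) * γ * (1 - ε) * lam1 - 1) ^ 2 +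
  Real.sqrt 2 * k / ((l : ℝ) * γ * (1 - ε) * lam1 - 1)

/-- `π(l,u) = (lu/(l+u-0.5))·(1/(1 - 1/(2·max{l,u})))`. -/
def piLU (l u : ℕ) : ℝ :=
  ((l : ℝ) * u / ((l : ℝ) + u - 0.5)) * (1 / (1 - 1 / (2 * ((max l u : ℕ) : ℝ))))

lemma PF_mulVec_apply {n : ℕ} (v : Fin n → ℝ) (i : Fin n) :
    (PF n *ᵥ v) i = v i - (n : ℝ)⁻¹ * ∑ j, v j := by
  rw [PF, sub_mulVec, Pi.sub_apply, one_mulVec]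
  congr 1
  simp [mulVec, dotProduct, ← mul_sum]

lemma dotProduct_PF_mulVec {n : ℕ} {x : Fin n → ℝ} (hx : ∑ i, x i = 0) (v : Fin n → ℝ) :
    x ⬝ᵥ PF n *ᵥ v = x ⬝ᵥ v := by
  simp only [dotProduct, PF_mulVec_apply, mul_sub, sum_sub_distrib, ← sum_mul, hx,
    zero_mul, sub_zero]

lemma vnorm_nonneg {n : ℕ} (x : Fin n → ℝ) : 0 ≤ vnorm x := Real.sqrt_nonneg _

lemma vnorm_sq {n : ℕ} (x : Fin n → ℝ) : vnorm x ^ 2 = ∑ i, x i ^ 2 :=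
  Real.sq_sqrt (by positivity)

lemma abs_dotProduct_le_vnorm_mul_vnorm {n : ℕ} (x y : Fin n → ℝ) :
    |x ⬝ᵥ y| ≤ vnorm x * vnorm y := by
  rw [← Real.sqrt_sq_eq_abs, vnorm, vnorm, ← Real.sqrt_mul (by positivity)]
  exact Real.sqrt_le_sqrt (sum_mul_sq_le_sq_mul_sq _ x y)

lemma vnorm_le_vnorm {n : ℕ} {x y : Fin n → ℝ} (h : ∀ i, x i ^ 2 ≤ y i ^ 2) :
    vnorm x ≤ vnorm y :=
  Real.sqrt_le_sqrt (sum_le_sum fun i _ => h i)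

lemma IS_mulVec_apply {n : ℕ} (S : Finset (Fin n)) (x : Fin n → ℝ) (i : Fin n) :
    (IS S *ᵥ x) i = if i ∈ S then x i else 0 := by
  simp [IS, mulVec_diagonal]

lemma dotProduct_IS_mulVec_self_nonneg {n : ℕ} (S : Finset (Fin n)) (x : Fin n → ℝ) :
    0 ≤ x ⬝ᵥ IS S *ᵥ x :=
  sum_nonneg fun i _ => by
    rw [IS_mulVec_apply]
    split_ifs <;> nlinarith

lemma vnorm_IS_mulVec_le {n : ℕ} {S : Finset (Fin n)} {y : Fin n → ℝ} {k : ℝ}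
    (hy : ∀ i ∈ S, |y i| ≤ k) : vnorm (IS S *ᵥ y) ≤ k * Real.sqrt S.card := by
  have hsum : ∑ i, (IS S *ᵥ y) i ^ 2 ≤ S.card * k ^ 2 := by
    simp only [IS_mulVec_apply, ite_pow, ne_eq, OfNat.ofNat_ne_zero, not_false_eq_true,
      zero_pow, sum_ite_mem, univ_inter]
    calc ∑ i ∈ S, y i ^ 2 ≤ ∑ _i ∈ S, k ^ 2 :=
          sum_le_sum fun i hi => sq_abs (y i) ▸ pow_le_pow_left₀ (abs_nonneg _) (hy i hi) 2
      _ = S.card * k ^ 2 := by rw [sum_const, nsmul_eq_mul]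
  rcases S.eq_empty_or_nonempty with rfl | ⟨i, hi⟩
  · simp [vnorm, IS_mulVec_apply]
  have hk : 0 ≤ k := (abs_nonneg _).trans (hy i hi)
  calc vnorm (IS S *ᵥ y) ≤ Real.sqrt (S.card * k ^ 2) := Real.sqrt_le_sqrt hsum
    _ = k * Real.sqrt S.card := by
      rw [Real.sqrt_mul (by positivity), Real.sqrt_sq hk, mul_comm]

lemma vnorm_IS_sub_IS_mulVec_le {n : ℕ} (S T : Finset (Fin n)) (x : Fin n → ℝ) :
    vnorm ((IS S - IS T) *ᵥ x) ≤ vnorm x :=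
  vnorm_le_vnorm fun i => by
    rw [sub_mulVec, Pi.sub_apply, IS_mulVec_apply, IS_mulVec_apply]
    split_ifs <;> nlinarith [sq_nonneg (x i)]

lemma IsLam1.mul_vnorm_sq_le {n : ℕ} {L : Matrix (Fin n) (Fin n) ℝ} {lam : ℝ}
    (hlam : IsLam1 L lam) {x : Fin n → ℝ} (hx : ∑ i, x i = 0) :
    lam * vnorm x ^ 2 ≤ x ⬝ᵥ L *ᵥ x := by
  rcases eq_or_ne x 0 with rfl | hx0
  · simp [vnorm]
  have hpos : 0 < ∑ i, x i ^ 2 := by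
    obtain ⟨i, hi⟩ := Function.ne_iff.mp hx0
    exact sum_pos' (fun j _ => sq_nonneg _) ⟨i, mem_univ i, sq_pos_of_ne_zero hi⟩
  rw [vnorm_sq, ← le_div_iff₀ hpos]
  exact hlam.2 ⟨x, hx0, hx, rfl⟩

lemma IsSparsifier.mul_vnorm_sq_le {n : ℕ} {LG LH : Matrix (Fin n) (Fin n) ℝ} {ε lam t : ℝ}
    (hsp : IsSparsifier LG LH ε) (hε : ε < 1) (hlam : IsLam1 LG lam) (ht : 0 ≤ t)
    (T : Finset (Fin n)) {x : Fin n → ℝ} (hx : ∑ i, x i = 0) :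
    t * (1 - ε) * lam * vnorm x ^ 2 ≤ x ⬝ᵥ (t • LH + IS T) *ᵥ x := by
  have hε' : 0 ≤ 1 - ε := by linarith
  rw [add_mulVec, dotProduct_add, smul_mulVec, dotProduct_smul, smul_eq_mul]
  calc t * (1 - ε) * lam * vnorm x ^ 2 = t * ((1 - ε) * (lam * vnorm x ^ 2)) := by ring
    _ ≤ t * (x ⬝ᵥ LH *ᵥ x) := by
      gcongr
      exact (mul_le_mul_of_nonneg_left (hlam.mul_vnorm_sq_le hx) hε').trans (hsp x).1
    _ ≤ _ := le_add_of_nonneg_right (dotProduct_IS_mulVec_self_nonneg T x)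

lemma vnorm_le_div_of_PF_mulVec_eq {n : ℕ} {M : Matrix (Fin n) (Fin n) ℝ} {x b : Fin n → ℝ}
    {c : ℝ} (hc : 0 < c) (hx : ∑ i, x i = 0) (hM : c * vnorm x ^ 2 ≤ x ⬝ᵥ M *ᵥ x)
    (h : PF n *ᵥ (M *ᵥ x) = PF n *ᵥ b) : vnorm x ≤ vnorm b / c := by
  have key : c * vnorm x ^ 2 ≤ vnorm x * vnorm b := calc
    c * vnorm x ^ 2 ≤ x ⬝ᵥ M *ᵥ x := hM
    _ = x ⬝ᵥ b := by rw [← dotProduct_PF_mulVec hx, h, dotProduct_PF_mulVec hx]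
    _ ≤ vnorm x * vnorm b := (le_abs_self _).trans (abs_dotProduct_le_vnorm_mul_vnorm x b)
  rw [le_div_iff₀ hc]
  rcases (vnorm_nonneg x).eq_or_lt with h0 | h0
  · rw [← h0, zero_mul]
    exact vnorm_nonneg b
  · nlinarith

lemma mulVec_mulVec_sub_eq_of_eq {R m n : Type*} [CommRing R] [Fintype m] [Fintype n]
    {P : Matrix m n R} {A B : Matrix n m R} {x x' : m → R} {b : n → R}
    (h : P *ᵥ (A *ᵥ x) = P *ᵥ b) (h' : P *ᵥ (B *ᵥ x') = P *ᵥ b) :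
    P *ᵥ (A *ᵥ (x - x')) = P *ᵥ ((B - A) *ᵥ x') := by
  rw [mulVec_sub, sub_mulVec, mulVec_sub, mulVec_sub, h, h']

lemma div_sq_le_mul_div_sub_one_sq {a c : ℝ} (ha : 0 ≤ a) (hc : 1 < c) :
    a / c ^ 2 ≤ 1.5 * a / (c - 1) ^ 2 :=
  div_le_div₀ (by positivity) (by linarith) (by nlinarith) (by nlinarith)

theorem stmt_5_general {n : ℕ}
    (AG AH : Matrix (Fin n) (Fin n) ℝ)
    (ε : ℝ) (hε1 : ε < 1)
    (hsp : IsSparsifier (Lap AG) (Lap AH) ε)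
    (γ : ℝ) (hγ : 0 < γ)
    (l : ℕ)
    (y : Fin n → ℝ) (k : ℝ) (hy : ∀ i, |y i| ≤ k)
    (lam1 : ℝ) (hlam1 : IsLam1 (Lap AG) lam1)
    (hmain : 1 < (l : ℝ) * γ * (1 - ε) * lam1)
    (S S' : Finset (Fin n)) (hS' : S'.card = l)
    (g g' : Fin n → ℝ)
    (hg : (∑ i, g i = 0) ∧
      (PF n).mulVec ((((l : ℝ) * γ) • Lap AH + IS S).mulVec g) =
        (PF n).mulVec ((IS S').mulVec y))
    (hg' : (∑ i, g' i = 0) ∧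
      (PF n).mulVec ((((l : ℝ) * γ) • Lap AH + IS S').mulVec g') =
        (PF n).mulVec ((IS S').mulVec y)) :
    vnorm (g - g') ≤ 1.5 * k * Real.sqrt l / ((l : ℝ) * γ * (1 - ε) * lam1 - 1) ^ 2 := by
  obtain ⟨hgF, hgEq⟩ := hg
  obtain ⟨hgF', hgEq'⟩ := hg'
  set c := (l : ℝ) * γ * (1 - ε) * lam1
  have hc : 0 < c := by linarith
  have hcoer (T : Finset (Fin n)) {x : Fin n → ℝ} (hx : ∑ i, x i = 0) :
      c * vnorm x ^ 2 ≤ x ⬝ᵥ ((l * γ : ℝ) • Lap AH + IS T) *ᵥ x :=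
    hsp.mul_vnorm_sq_le hε1 hlam1 (by positivity) T hx
  have hyS : vnorm (IS S' *ᵥ y) ≤ k * Real.sqrt l := hS' ▸ vnorm_IS_mulVec_le fun i _ => hy i
  have hg'_le : vnorm g' ≤ k * Real.sqrt l / c :=
    (vnorm_le_div_of_PF_mulVec_eq hc hgF' (hcoer S' hgF') hgEq').trans (by gcongr)
  have hdF : ∑ i, (g - g') i = 0 := by simp [sum_sub_distrib, hgF, hgF']
  have hdEq := mulVec_mulVec_sub_eq_of_eq hgEq hgEq'
  rw [add_sub_add_left_eq_sub] at hdEq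
  calc vnorm (g - g') ≤ vnorm ((IS S' - IS S) *ᵥ g') / c :=
        vnorm_le_div_of_PF_mulVec_eq hc hdF (hcoer S hdF) hdEq
    _ ≤ k * Real.sqrt l / c / c := by
        gcongr
        exact (vnorm_IS_sub_IS_mulVec_le S' S g').trans hg'_le
    _ = k * Real.sqrt l / c ^ 2 := by rw [div_div, sq]
    _ ≤ 1.5 * (k * Real.sqrt l) / (c - 1) ^ 2 :=
        div_sq_le_mul_div_sub_one_sq ((vnorm_nonneg _).trans hyS) hmain
    _ = _ := by rw [mul_assoc]

/-- the term `‖A⁻¹y_{S'} − B⁻¹y_{S'}‖` in the stability proof is bounded by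
`1.5·k·√l/(lγ(1−ε)λ₁ − 1)²`. -/
theorem stmt_5 {n : ℕ} (hn : 2 ≤ n)
    (AG AH : Matrix (Fin n) (Fin n) ℝ)
    (hG : IsWeightedGraph AG) (hGc : GraphConnected AG)
    (hH : IsWeightedGraph AH)
    (ε : ℝ) (hε0 : 0 ≤ ε) (hε1 : ε < 1)
    (hsp : IsSparsifier (Lap AG) (Lap AH) ε)
    (γ : ℝ) (hγ : 0 < γ)
    (l : ℕ) (hl : 1 ≤ l) (hln : l ≤ n - 1)
    (y : Fin n → ℝ) (k : ℝ) (hy : ∀ i, |y i| ≤ k)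
    (lam1 : ℝ) (hlam1 : IsLam1 (Lap AG) lam1)
    (hmain : 1 < (l : ℝ) * γ * (1 - ε) * lam1)
    (S S' : Finset (Fin n)) (hS : S.card = l) (hS' : S'.card = l)
    (hdiff : (S \ S').card = 1) (hdiff' : (S' \ S).card = 1)
    (g g' : Fin n → ℝ)
    (hg : (∑ i, g i = 0) ∧
      (PF n).mulVec ((((l : ℝ) * γ) • Lap AH + IS S).mulVec g) =
        (PF n).mulVec ((IS S').mulVec y))
    (hg' : (∑ i, g' i = 0) ∧
      (PF n).mulVec ((((l : ℝ) * γ) • Lap AH + IS S').mulVec g') =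
        (PF n).mulVec ((IS S').mulVec y)) :
    vnorm (g - g') ≤ 1.5 * k * Real.sqrt l / ((l : ℝ) * γ * (1 - ε) * lam1 - 1) ^ 2 :=
  stmt_5_general AG AH ε hε1 hsp γ hγ l y k hy lam1 hlam1 hmain S S' hS' g g' hg hg'
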